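/- arXiv:math/0102008 — 2 statements merged into one kernel-verified Lean document; each statement's English description precedes it below -/
import Mathlib

section
/- Let (k_{i_j})_{j≥1} be a subsequence of (k_i)_{i≥1} and define Ḡ(r) = max_{j ∈ ℕ} [ f(r)·f(k_{i_j})/f(r·k_{i_j}) ] · ∏_{s=1}^{j−1} f(k_{i_s})/k_{i_s} for r > 1. Then Ḡ(r) ≥ G(r) for every r > 1. -/
open Finset Filter Topology

/-- `f(x) = log₂(x+1)`. -/
noncomputable def flog (x : ℝ) : ℝ := Real.logb 2 (x + 1)

/-- The growth conditions (2.12) and (2.13) on the sequence `(k_i)_{i ≥ 1}`. -/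
def kGood (k : ℕ → ℕ) : Prop :=
  (∀ i, 1 ≤ i → k i < k (i + 1)) ∧ (∀ i, 1 ≤ i → 1 ≤ k i) ∧
  (1 : ℝ) ≤ (2 / 3 : ℝ) * flog ((3 / 4 : ℝ) * flog (k 1)) ∧
  (3 : ℝ) ≤ Real.log (k 1) ∧
  (∀ r a : ℝ, (k 1 : ℝ) < r → 1 < a → (3 / 4 : ℝ) * a * flog r ≤ flog (r ^ a))

/-- `G(r) = max_{i ≥ 1} [f(r)f(k_i)/f(r k_i)] ∏_{j=1}^{i-1} f(k_j)/k_j`. -/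
noncomputable def Gfun (k : ℕ → ℕ) (r : ℝ) : ℝ :=
  sSup { c | ∃ i : ℕ, 1 ≤ i ∧
    c = flog r * flog (k i) / flog (r * (k i)) * ∏ j ∈ Finset.Ico 1 i, flog (k j) / (k j) }

/-! Auxiliary lemmas -/

lemma bern {u p : ℝ} (hu : 0 ≤ u) (hp0 : 0 ≤ p) (hp1 : p ≤ 1) :
    u ^ p ≤ 1 + p * (u - 1) := by
  have h := rpow_one_add_le_one_add_mul_self (s := u - 1) (by linarith) hp0 hp1
  have e : (1 : ℝ) + (u - 1) = u := by ring
  rwa [e] at h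

lemma keyL2 {t r p : ℝ} (ht : 1 ≤ t) (hrr : 1 ≤ r) (hp0 : 0 < p) (hp1 : p ≤ 1) :
    (r * (t - 1) + 1) ^ p ≤ r * t ^ p - r + 1 := by
  have ht0 : (0 : ℝ) < t := by linarith
  have htp : (0 : ℝ) < t ^ p := Real.rpow_pos_of_pos ht0 p
  have hx : (0 : ℝ) ≤ r * (t - 1) + 1 := by nlinarith
  have hu0 : (0 : ℝ) ≤ (r * (t - 1) + 1) / t := div_nonneg hx ht0.le
  have e1 : (r * (t - 1) + 1) ^ p = ((r * (t - 1) + 1) / t) ^ p * t ^ p := by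
    rw [← Real.mul_rpow hu0 ht0.le, div_mul_cancel₀]
    exact ht0.ne'
  have b1 := bern hu0 hp0.le hp1
  have b2 := bern (u := 1 / t) (by positivity) hp0.le hp1
  have e2 : ((1 : ℝ) / t) ^ p = 1 / t ^ p := by
    rw [Real.div_rpow (by norm_num) ht0.le, Real.one_rpow]
  have b2' : (1 : ℝ) ≤ t ^ p + p * t ^ p * (1 / t - 1) := by
    calc (1 : ℝ) = (1 / t) ^ p * t ^ p := by
          rw [e2]; field_simp
      _ ≤ (1 + p * (1 / t - 1)) * t ^ p := mul_le_mul_of_nonneg_right b2 htp.le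
      _ = t ^ p + p * t ^ p * (1 / t - 1) := by ring
  have key : p * t ^ p * (t - 1) ≤ (t ^ p - 1) * t := by
    have h := mul_le_mul_of_nonneg_right b2' ht0.le
    have e3 : (t ^ p + p * t ^ p * (1 / t - 1)) * t = t ^ p * t + p * t ^ p * (1 - t) := by
      field_simp
    rw [e3] at h
    nlinarith [h]
  rw [e1]
  have step1 : ((r * (t - 1) + 1) / t) ^ p * t ^ p ≤ (1 + p * ((r * (t - 1) + 1) / t - 1)) * t ^ p :=
    mul_le_mul_of_nonneg_right b1 htp.le
  refine step1.trans ?_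
  have hr1 : (0 : ℝ) ≤ r - 1 := by linarith
  have hG : (1 + p * ((r * (t - 1) + 1) / t - 1)) * t ^ p * t
      = t ^ p * t + (r - 1) * (p * t ^ p * (t - 1)) := by
    field_simp; ring
  have hstep : (1 + p * ((r * (t - 1) + 1) / t - 1)) * t ^ p * t ≤ (r * t ^ p - r + 1) * t := by
    rw [hG]
    nlinarith [mul_nonneg hr1 (sub_nonneg.mpr key)]
  exact le_of_mul_le_mul_right hstep ht0

lemma keyL3 {m n r : ℝ} (hm : 1 ≤ m) (hmn : m ≤ n) (hrr : 1 ≤ r) :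
    Real.log (m + 1) * Real.log (r * n + 1) ≤ Real.log (n + 1) * Real.log (r * m + 1) := by
  have ha : 0 < Real.log (m + 1) := Real.log_pos (by linarith)
  have hb : 0 < Real.log (n + 1) := Real.log_pos (by linarith)
  have hab : Real.log (m + 1) ≤ Real.log (n + 1) := Real.log_le_log (by linarith) (by linarith)
  set p := Real.log (m + 1) / Real.log (n + 1) with hp
  have hp0 : 0 < p := div_pos ha hb
  have hp1 : p ≤ 1 := (div_le_one hb).mpr hab
  have htp : (n + 1) ^ p = m + 1 := by
    rw [Real.rpow_def_of_pos (by linarith), hp, mul_comm, div_mul_cancel₀ _ hb.ne',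
      Real.exp_log (by linarith)]
  have h2 := keyL2 (t := n + 1) (r := r) (p := p) (by linarith) hrr hp0 hp1
  rw [htp] at h2
  have e : r * (n + 1 - 1) + 1 = r * n + 1 := by ring
  rw [e] at h2
  have e2 : r * (m + 1) - r + 1 = r * m + 1 := by ring
  rw [e2] at h2
  have hpos : (0 : ℝ) < r * n + 1 := by nlinarith
  have hlog : p * Real.log (r * n + 1) ≤ Real.log (r * m + 1) := by
    have := Real.log_le_log (Real.rpow_pos_of_pos hpos p) h2
    rwa [Real.log_rpow hpos] at this
  have := mul_le_mul_of_nonneg_left hlog hb.le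
  calc Real.log (m + 1) * Real.log (r * n + 1)
      = Real.log (n + 1) * (p * Real.log (r * n + 1)) := by
        rw [hp]; field_simp
    _ ≤ Real.log (n + 1) * Real.log (r * m + 1) := this

lemma flog_pos {x : ℝ} (hx : 0 < x) : 0 < flog x :=
  Real.logb_pos (by norm_num) (by linarith)

lemma flog_nonneg {x : ℝ} (hx : 0 ≤ x) : 0 ≤ flog x :=
  Real.logb_nonneg (by norm_num) (by linarith)

lemma flog_mono {x y : ℝ} (hx : 0 ≤ x) (hxy : x ≤ y) : flog x ≤ flog y :=
  Real.logb_le_logb_of_le (by norm_num) (by linarith) (by linarith)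

lemma flog_nat_le (n : ℕ) : flog n ≤ n := by
  have h1 : ((n : ℝ) + 1) ≤ (2 : ℝ) ^ (n : ℝ) := by
    rw [Real.rpow_natCast]
    have := Nat.lt_two_pow_self (n := n)
    have : (n : ℝ) + 1 ≤ ((2 ^ n : ℕ) : ℝ) := by exact_mod_cast this
    simpa using this
  have := Real.logb_le_logb_of_le (by norm_num : (1:ℝ) < 2) (by positivity) h1
  rwa [Real.logb_rpow (by norm_num) (by norm_num)] at this

lemma flog_mul_comm {m n r : ℝ} (hm : 1 ≤ m) (hmn : m ≤ n) (hrr : 1 ≤ r) :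
    flog m * flog (r * n) ≤ flog n * flog (r * m) := by
  have h2 : 0 < Real.log 2 := Real.log_pos (by norm_num)
  have h := keyL3 hm hmn hrr
  unfold flog Real.logb
  rw [div_mul_div_comm, div_mul_div_comm]
  exact div_le_div_of_nonneg_right h (by positivity) |>.trans_eq rfl

lemma Acomp {m n r : ℝ} (hm : 1 ≤ m) (hmn : m ≤ n) (hr : 1 < r) :
    flog r * flog m / flog (r * m) ≤ flog r * flog n / flog (r * n) := by
  have hrm : 0 < flog (r * m) := flog_pos (by nlinarith)
  have hrn : 0 < flog (r * n) := flog_pos (by nlinarith)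
  rw [div_le_div_iff₀ hrm hrn]
  have h := flog_mul_comm hm hmn hr.le
  have hfr : 0 ≤ flog r := flog_nonneg (by linarith)
  calc flog r * flog m * flog (r * n) = flog r * (flog m * flog (r * n)) := by ring
    _ ≤ flog r * (flog n * flog (r * m)) := mul_le_mul_of_nonneg_left h hfr
    _ = flog r * flog n * flog (r * m) := by ring

/-- Proposition 2.3 (b): replacing `(k_i)` by a subsequence `(k_{i_j})` in the
definition of `G` yields `Ḡ(r) ≥ G(r)` for all `r > 1`. -/
theorem statement6 (k : ℕ → ℕ) (hk : kGood k)
    (φ : ℕ → ℕ) (hφ1 : 1 ≤ φ 1) (hφ : ∀ j, 1 ≤ j → φ j < φ (j + 1))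
    (r : ℝ) (hr : 1 < r) :
    Gfun k r ≤ Gfun (fun j => k (φ j)) r := by
  obtain ⟨hkmono, hk1, -, -, -⟩ := hk
  -- k is monotone on indices ≥ 1
  have kmono : ∀ a b : ℕ, 1 ≤ a → a ≤ b → k a ≤ k b := by
    intro a b ha hab
    induction b, hab using Nat.le_induction with
    | base => exact le_refl _
    | succ b hb ih => exact ih.trans (hkmono b (ha.trans hb)).le
  -- φ is strictly monotone on indices ≥ 1, and φ j ≥ 1, φ j ≥ j there
  have φmono : ∀ a b : ℕ, 1 ≤ a → a < b → φ a < φ b := by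
    intro a b ha hab
    induction b, hab using Nat.le_induction with
    | base => exact hφ a ha
    | succ b hb ih => exact ih.trans (hφ b (by omega))
  have φge1 : ∀ a : ℕ, 1 ≤ a → 1 ≤ φ a := by
    intro a ha
    rcases Nat.eq_or_lt_of_le ha with h | h
    · exact h ▸ hφ1
    · exact hφ1.trans (φmono 1 a le_rfl h).le
  have φge : ∀ a : ℕ, 1 ≤ a → a ≤ φ a := by
    intro a ha
    induction a with
    | zero => omega
    | succ n ih =>
      rcases Nat.eq_or_lt_of_le ha with h | h
      · have hn0 : n = 0 := by omega
        subst hn0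
        simpa using hφ1
      · have hn : 1 ≤ n := by omega
        have h2 := φmono n (n + 1) hn (by omega)
        have h3 := ih hn
        omega
  -- the factor function
  set g : ℕ → ℝ := fun t => flog (k t) / (k t) with hg
  have hg01 : ∀ t : ℕ, 1 ≤ t → 0 ≤ g t ∧ g t ≤ 1 := by
    intro t ht
    have hkt : 1 ≤ k t := hk1 t ht
    have hktR : (1 : ℝ) ≤ (k t : ℝ) := by exact_mod_cast hkt
    constructor
    · exact div_nonneg (flog_nonneg (by linarith)) (by linarith)
    · rw [hg]
      rw [div_le_one (by linarith)]
      exact flog_nat_le (k t)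
  have hfr0 : 0 < flog r := flog_pos (by linarith)
  -- the subsequence set, beta reduced
  set T : Set ℝ := { c | ∃ i : ℕ, 1 ≤ i ∧
      c = flog r * flog (k (φ i)) / flog (r * (k (φ i))) *
        ∏ s ∈ Finset.Ico 1 i, flog (k (φ s)) / (k (φ s)) } with hT
  have hGT : Gfun (fun j => k (φ j)) r = sSup T := rfl
  -- T is bounded above by flog r
  have hbdd : BddAbove T := by
    refine ⟨flog r, fun c hc => ?_⟩
    obtain ⟨i, hi, rfl⟩ := hc
    have hki : 1 ≤ k (φ i) := hk1 _ (φge1 i hi)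
    have hkiR : (1 : ℝ) ≤ (k (φ i) : ℝ) := by exact_mod_cast hki
    have h1 : flog (k (φ i)) ≤ flog (r * (k (φ i))) :=
      flog_mono (by linarith) (by nlinarith)
    have h2 : 0 < flog (r * (k (φ i))) := flog_pos (by nlinarith)
    have hA : flog r * flog (k (φ i)) / flog (r * (k (φ i))) ≤ flog r := by
      rw [div_le_iff₀ h2]
      have := mul_le_mul_of_nonneg_left h1 hfr0.le
      linarith
    have hA0 : 0 ≤ flog r * flog (k (φ i)) / flog (r * (k (φ i))) :=
      div_nonneg (mul_nonneg hfr0.le (flog_nonneg (by linarith))) h2.le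
    have hP1 : (∏ s ∈ Finset.Ico 1 i, flog (k (φ s)) / (k (φ s) : ℝ)) ≤ 1 := by
      apply Finset.prod_le_one
      · intro s hs
        exact (hg01 (φ s) (φge1 s (Finset.mem_Ico.mp hs).1)).1
      · intro s hs
        exact (hg01 (φ s) (φge1 s (Finset.mem_Ico.mp hs).1)).2
    have hP0 : 0 ≤ ∏ s ∈ Finset.Ico 1 i, flog (k (φ s)) / (k (φ s) : ℝ) :=
      Finset.prod_nonneg fun s hs => (hg01 (φ s) (φge1 s (Finset.mem_Ico.mp hs).1)).1
    calc flog r * flog (k (φ i)) / flog (r * (k (φ i))) *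
          ∏ s ∈ Finset.Ico 1 i, flog (k (φ s)) / (k (φ s) : ℝ)
        ≤ flog r * 1 := mul_le_mul hA hP1 hP0 hfr0.le
      _ = flog r := mul_one _
  rw [hGT]
  unfold Gfun
  apply csSup_le
  · exact ⟨flog r * flog (k 1) / flog (r * (k 1)) * ∏ s ∈ Finset.Ico 1 1, flog (k s) / (k s),
      1, le_rfl, rfl⟩
  · rintro c ⟨i, hi, rfl⟩
    classical
    -- find the minimal j ≥ 1 with i ≤ φ j
    have hex : ∃ j : ℕ, 1 ≤ j ∧ i ≤ φ j := ⟨i, hi, φge i hi⟩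
    set j := Nat.find hex with hj
    obtain ⟨hj1, hjφ⟩ := Nat.find_spec hex
    have hmin : ∀ s, s < j → ¬(1 ≤ s ∧ i ≤ φ s) := fun s hs => Nat.find_min hex hs
    -- A comparison
    have hki : 1 ≤ k i := hk1 i hi
    have hkiR : (1 : ℝ) ≤ (k i : ℝ) := by exact_mod_cast hki
    have hkj : 1 ≤ k (φ j) := hk1 _ (φge1 j hj1)
    have hkjR : (1 : ℝ) ≤ (k (φ j) : ℝ) := by exact_mod_cast hkj
    have hkkR : ((k i : ℝ)) ≤ ((k (φ j) : ℝ)) := by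
      exact_mod_cast kmono i (φ j) hi hjφ
    have hA := Acomp hkiR hkkR hr
    have hA0 : 0 ≤ flog r * flog (k (φ j)) / flog (r * (k (φ j))) :=
      div_nonneg (mul_nonneg hfr0.le (flog_nonneg (by linarith)))
        (flog_pos (by nlinarith)).le
    -- product comparison
    have hinj : ∀ x ∈ Finset.Ico 1 j, ∀ y ∈ Finset.Ico 1 j, φ x = φ y → x = y := by
      intro x hx y hy hxy
      rcases lt_trichotomy x y with h | h | h
      · exact absurd hxy (φmono x y (Finset.mem_Ico.mp hx).1 h).ne
      · exact h
      · exact absurd hxy.symm (φmono y x (Finset.mem_Ico.mp hy).1 h).ne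
    have hsub : (Finset.Ico 1 j).image φ ⊆ Finset.Ico 1 i := by
      intro t ht
      obtain ⟨s, hs, rfl⟩ := Finset.mem_image.mp ht
      obtain ⟨hs1, hsj⟩ := Finset.mem_Ico.mp hs
      have hns := hmin s hsj
      push_neg at hns
      exact Finset.mem_Ico.mpr ⟨φge1 s hs1, hns hs1⟩
    have hPimg : (∏ s ∈ Finset.Ico 1 j, g (φ s)) = ∏ t ∈ (Finset.Ico 1 j).image φ, g t :=
      (Finset.prod_image hinj).symm
    have hP0i : 0 ≤ ∏ t ∈ Finset.Ico 1 i, g t :=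
      Finset.prod_nonneg fun t ht => (hg01 t (Finset.mem_Ico.mp ht).1).1
    have hP : (∏ t ∈ Finset.Ico 1 i, g t) ≤ ∏ s ∈ Finset.Ico 1 j, g (φ s) := by
      rw [hPimg]
      rw [← Finset.prod_sdiff hsub]
      have h1le : (∏ t ∈ Finset.Ico 1 i \ (Finset.Ico 1 j).image φ, g t) ≤ 1 := by
        apply Finset.prod_le_one
        · intro t ht
          exact (hg01 t (Finset.mem_Ico.mp (Finset.mem_sdiff.mp ht).1).1).1
        · intro t ht
          exact (hg01 t (Finset.mem_Ico.mp (Finset.mem_sdiff.mp ht).1).1).2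
      have h0 : 0 ≤ ∏ t ∈ (Finset.Ico 1 j).image φ, g t :=
        Finset.prod_nonneg fun t ht =>
          (hg01 t (Finset.mem_Ico.mp (hsub ht)).1).1
      exact mul_le_of_le_one_left h0 h1le
    -- combine
    have hfinal : flog r * flog (k i) / flog (r * (k i)) * ∏ t ∈ Finset.Ico 1 i, g t
        ≤ flog r * flog (k (φ j)) / flog (r * (k (φ j))) * ∏ s ∈ Finset.Ico 1 j, g (φ s) :=
      mul_le_mul hA hP hP0i hA0
    refine hfinal.trans (le_csSup hbdd ?_)
    exact ⟨j, hj1, rfl⟩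
end

section
/- Let s ≥ k₁ with s ≥ m₁ where m₁ = (2^{k₁} − 1)/k₁, let r ≥ s, and define (r_ℓ)_{ℓ≥0} by r₀ = r and r_{ℓ+1} = r_ℓ^{f(r_ℓ)}. Then for every ℓ ≥ 0: r_ℓ ≥ r^{((3/4)·f(r))^{2^ℓ − 1}} ≥ s^{((3/4)·f(s))^{2^ℓ − 1}}, and consequently f(r_ℓ) ≥ ((3/4)·f(s))^{2^ℓ}. -/
/-! Writing `c = (3/4) f(r)`, the growth hypothesis turns a lower bound `r_ℓ ≥ r^{c^{2^ℓ-1}}` into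
`f(r_ℓ) ≥ (3/4) c^{2^ℓ-1} f(r) = c^{2^ℓ}`, and then `r_{ℓ+1} = r_ℓ^{f(r_ℓ)} ≥ (r^{c^{2^ℓ-1}})^{c^{2^ℓ}}`
doubles the exponent. The hypothesis `ln k₁ ≥ 3` makes `k₁ ≥ 5`, so `m₁ > k₁` and the growth
hypothesis applies at `r ≥ s ≥ m₁`. -/

open Finset Filter Topology

/-- The sequence `r₀ = r`, `r_{ℓ+1} = r_ℓ^{f(r_ℓ)}`. -/
noncomputable def rseq (r : ℝ) : ℕ → ℝ
  | 0 => r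
  | (ℓ + 1) => rseq r ℓ ^ flog (rseq r ℓ)

lemma Nat.sq_add_one_lt_two_pow {n : ℕ} (hn : 5 ≤ n) : n ^ 2 + 1 < 2 ^ n := by
  induction n, hn using Nat.le_induction with
  | base => norm_num
  | succ m hm ih =>
    calc (m + 1) ^ 2 + 1 ≤ 2 * (m ^ 2 + 1) := by nlinarith
      _ < 2 * 2 ^ m := by omega
      _ = 2 ^ (m + 1) := by ring

lemma lt_two_pow_sub_one_div {k : ℕ} (hk : 5 ≤ k) : (k : ℝ) < (2 ^ k - 1) / k := by
  have hk0 : (0 : ℝ) < k := by exact_mod_cast (by omega : 0 < k)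
  have hpow : (k : ℝ) ^ 2 + 1 < 2 ^ k := by exact_mod_cast Nat.sq_add_one_lt_two_pow hk
  rw [lt_div_iff₀ hk0]
  nlinarith

lemma eight_lt_of_three_le_log {x : ℝ} (hx : 0 ≤ x) (h : 3 ≤ Real.log x) : 8 < x := by
  have hx0 : 0 < x := hx.lt_of_ne fun hx0 => by norm_num [← hx0] at h
  calc (8 : ℝ) = 2 ^ 3 := by norm_num
    _ < Real.exp 1 ^ 3 := by gcongr; exact Real.exp_one_gt_two
    _ = Real.exp 3 := by rw [← Real.exp_nat_mul]; norm_num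
    _ ≤ x := (Real.le_log_iff_exp_le hx0).mp h

lemma flog_le_flog {x y : ℝ} (hx : -1 < x) (hxy : x ≤ y) : flog x ≤ flog y :=
  Real.logb_le_logb_of_le one_lt_two (by linarith) (by linarith)

lemma two_le_flog {x : ℝ} (hx : 3 ≤ x) : 2 ≤ flog x := by
  rw [flog, Real.le_logb_iff_rpow_le one_lt_two (by linarith)]
  norm_num
  linarith

section Growth

variable {r : ℝ}

lemma three_quarters_mul_flog_le_flog_of_rpow_le (hr : 0 ≤ r)
    (hgrowth : ∀ a : ℝ, 1 < a → 3 / 4 * a * flog r ≤ flog (r ^ a))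
    {a x : ℝ} (ha : 1 ≤ a) (hx : r ^ a ≤ x) : 3 / 4 * a * flog r ≤ flog x := by
  have hra : 0 ≤ r ^ a := Real.rpow_nonneg hr a
  rcases ha.eq_or_lt with rfl | ha
  · rw [Real.rpow_one] at hx
    linarith [flog_nonneg hr, flog_le_flog (by linarith) hx]
  · exact (hgrowth a ha).trans (flog_le_flog (by linarith) hx)

lemma pow_le_flog_of_rpow_pow_le (hr : 1 ≤ r) (hc : 1 ≤ 3 / 4 * flog r)
    (hgrowth : ∀ a : ℝ, 1 < a → 3 / 4 * a * flog r ≤ flog (r ^ a))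
    {n : ℕ} (hn : n ≠ 0) {x : ℝ} (hx : r ^ ((3 / 4 * flog r) ^ (n - 1)) ≤ x) :
    (3 / 4 * flog r) ^ n ≤ flog x := by
  calc (3 / 4 * flog r) ^ n = 3 / 4 * (3 / 4 * flog r) ^ (n - 1) * flog r := by
        rw [← pow_sub_one_mul hn]; ring
    _ ≤ flog x :=
        three_quarters_mul_flog_le_flog_of_rpow_le (by linarith) hgrowth (one_le_pow₀ hc) hx

lemma rpow_pow_le_rseq (hr : 1 ≤ r) (hc : 1 ≤ 3 / 4 * flog r)
    (hgrowth : ∀ a : ℝ, 1 < a → 3 / 4 * a * flog r ≤ flog (r ^ a)) (ℓ : ℕ) :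
    r ^ ((3 / 4 * flog r) ^ (2 ^ ℓ - 1)) ≤ rseq r ℓ := by
  set c := 3 / 4 * flog r
  induction ℓ with
  | zero => simp [rseq]
  | succ m ih =>
    have hexp : 2 ^ (m + 1) - 1 = (2 ^ m - 1) + 2 ^ m := by
      have := Nat.one_le_two_pow (n := m)
      rw [pow_succ]
      omega
    have hflog : c ^ 2 ^ m ≤ flog (rseq r m) :=
      pow_le_flog_of_rpow_pow_le hr hc hgrowth (pow_ne_zero m two_ne_zero) ih
    have hrseq : 1 ≤ rseq r m := (Real.one_le_rpow hr (by positivity)).trans ih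
    calc r ^ (c ^ (2 ^ (m + 1) - 1))
        = (r ^ (c ^ (2 ^ m - 1))) ^ (c ^ 2 ^ m) := by
          rw [← Real.rpow_mul (by linarith), ← pow_add, ← hexp]
      _ ≤ rseq r m ^ (c ^ 2 ^ m) := Real.rpow_le_rpow (by positivity) ih (by positivity)
      _ ≤ rseq r m ^ flog (rseq r m) := Real.rpow_le_rpow_of_exponent_le hrseq hflog
      _ = rseq r (m + 1) := rfl

lemma pow_le_flog_rseq (hr : 1 ≤ r) (hc : 1 ≤ 3 / 4 * flog r)
    (hgrowth : ∀ a : ℝ, 1 < a → 3 / 4 * a * flog r ≤ flog (r ^ a)) (ℓ : ℕ) :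
    (3 / 4 * flog r) ^ 2 ^ ℓ ≤ flog (rseq r ℓ) :=
  pow_le_flog_of_rpow_pow_le hr hc hgrowth (pow_ne_zero ℓ two_ne_zero)
    (rpow_pow_le_rseq hr hc hgrowth ℓ)

end Growth

lemma rpow_pow_three_quarters_flog_le {s r : ℝ} (hs : 0 ≤ s) (hsr : s ≤ r) (hr : 1 ≤ r) (n : ℕ) :
    s ^ ((3 / 4 * flog s) ^ n) ≤ r ^ ((3 / 4 * flog r) ^ n) := by
  have hcs : 0 ≤ 3 / 4 * flog s := by linarith [flog_nonneg hs]
  calc s ^ ((3 / 4 * flog s) ^ n) ≤ r ^ ((3 / 4 * flog s) ^ n) :=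
        Real.rpow_le_rpow hs hsr (by positivity)
    _ ≤ r ^ ((3 / 4 * flog r) ^ n) := Real.rpow_le_rpow_of_exponent_le hr
        (pow_le_pow_left₀ hcs (by linarith [flog_le_flog (by linarith) hsr]) n)

theorem statement8_general (k1 : ℕ)
    (h2 : (3 : ℝ) ≤ Real.log k1)
    (h3 : ∀ r a : ℝ, (k1 : ℝ) < r → 1 < a → (3 / 4 : ℝ) * a * flog r ≤ flog (r ^ a))
    (s r : ℝ) (hs2 : ((2 : ℝ) ^ k1 - 1) / k1 ≤ s) (hsr : s ≤ r)
    (ℓ : ℕ) :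
    r ^ ((((3 : ℝ) / 4) * flog r) ^ (2 ^ ℓ - 1 : ℕ)) ≤ rseq r ℓ ∧
    s ^ ((((3 : ℝ) / 4) * flog s) ^ (2 ^ ℓ - 1 : ℕ)) ≤
      r ^ ((((3 : ℝ) / 4) * flog r) ^ (2 ^ ℓ - 1 : ℕ)) ∧
    (((3 : ℝ) / 4) * flog s) ^ (2 ^ ℓ : ℕ) ≤ flog (rseq r ℓ) := by
  have hk1 : (8 : ℝ) < k1 := eight_lt_of_three_le_log k1.cast_nonneg h2
  have hks : (k1 : ℝ) < s :=
    (lt_two_pow_sub_one_div (by exact_mod_cast (by linarith : (5 : ℝ) ≤ k1))).trans_le hs2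
  have hkr : (k1 : ℝ) < r := hks.trans_le hsr
  have hc : 1 ≤ 3 / 4 * flog r := by linarith [two_le_flog (by linarith : (3 : ℝ) ≤ r)]
  have hgrowth := fun a => h3 r a hkr
  have hcsr : 3 / 4 * flog s ≤ 3 / 4 * flog r := by
    linarith [flog_le_flog (by linarith : (-1 : ℝ) < s) hsr]
  refine ⟨rpow_pow_le_rseq (by linarith) hc hgrowth ℓ,
    rpow_pow_three_quarters_flog_le (by linarith) hsr (by linarith) _, ?_⟩
  calc (3 / 4 * flog s) ^ 2 ^ ℓ ≤ (3 / 4 * flog r) ^ 2 ^ ℓ :=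
        pow_le_pow_left₀ (by linarith [flog_nonneg (by linarith : (0 : ℝ) ≤ s)]) hcsr _
    _ ≤ flog (rseq r ℓ) := pow_le_flog_rseq (by linarith) hc hgrowth ℓ

/-- Inequalities (2.24) and (2.25): for `s ≥ k₁` with `s ≥ m₁ = (2^{k₁}-1)/k₁` and
`r ≥ s`, one has `r_ℓ ≥ r^{((3/4)f(r))^{2^ℓ-1}} ≥ s^{((3/4)f(s))^{2^ℓ-1}}` and
`f(r_ℓ) ≥ ((3/4)f(s))^{2^ℓ}`. -/
theorem statement8 (k1 : ℕ) (hk1pos : 1 ≤ k1)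
    (h1 : (1 : ℝ) ≤ (2 / 3 : ℝ) * flog ((3 / 4 : ℝ) * flog k1))
    (h2 : (3 : ℝ) ≤ Real.log k1)
    (h3 : ∀ r a : ℝ, (k1 : ℝ) < r → 1 < a → (3 / 4 : ℝ) * a * flog r ≤ flog (r ^ a))
    (s r : ℝ) (hs1 : (k1 : ℝ) ≤ s) (hs2 : ((2 : ℝ) ^ k1 - 1) / k1 ≤ s) (hsr : s ≤ r)
    (ℓ : ℕ) :
    r ^ ((((3 : ℝ) / 4) * flog r) ^ (2 ^ ℓ - 1 : ℕ)) ≤ rseq r ℓ ∧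
    s ^ ((((3 : ℝ) / 4) * flog s) ^ (2 ^ ℓ - 1 : ℕ)) ≤
      r ^ ((((3 : ℝ) / 4) * flog r) ^ (2 ^ ℓ - 1 : ℕ)) ∧
    (((3 : ℝ) / 4) * flog s) ^ (2 ^ ℓ : ℕ) ≤ flog (rseq r ℓ) :=
  statement8_general k1 h2 h3 s r hs2 hsr ℓ
end
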